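/- arXiv:math/0105210 — 5 statements merged into one kernel-verified Lean document; each statement's English description precedes it below -/
import Mathlib

section
/- Let Φ_n ∈ ℚ[X_1,...,X_n] be defined by Φ_n = Σ_{b_1 + 2b_2 + ... + n b_n = n} ((b_1+...+b_n)!/(b_1!...b_n!)) X_1^{b_1}...X_n^{b_n}, with the convention that each X_i has weight i and Φ_n is weight-homogeneous of weight n. Then for every k ≥ 1, Φ_k(−Φ_1, ..., −Φ_k) = −X_k, where Φ_j(−Φ_1,...,−Φ_j) means substituting −Φ_i for X_i. -/
/-!
`Φ_n` is the coefficient of `tⁿ` in `1 / (1 - Σᵢ Xᵢ tⁱ)`, which shows up as the recursion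
`Φ_{n+1} = Σ_{i+j=n} X_{i+1} Φ_j` (with `Φ₀ = 1`). On coefficients this recursion is the Pascal
rule `multinomial b = Σ_{j ∈ supp b} multinomial (b - eⱼ)`. Substituting `Xᵢ ↦ -Φᵢ` into the
recursion and using the claim for smaller indices, the two sums that appear are the recursion for
`Φ_{n+1}` read backwards, and they cancel down to `-X_{n+1}`.
-/

open MvPolynomial

/-- `Phi n` is the polynomial `Φ_n = Σ_{b₁ + 2b₂ + ... + n bₙ = n}
((b₁+...+bₙ)!/(b₁!...bₙ!)) X₁^{b₁}...Xₙ^{bₙ}`, where the variable `X_{i+1}` is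
represented by `MvPolynomial.X i`. -/
noncomputable def Phi (n : ℕ) : MvPolynomial ℕ ℚ :=
  ∑ b ∈ (Fintype.piFinset fun _ : Fin n => Finset.range (n + 1)).filter
      (fun b => ∑ i, (i.1 + 1) * b i = n),
    (((∑ i, b i).factorial : ℚ) / ∏ i, ((b i).factorial : ℚ)) •
      ∏ i, MvPolynomial.X i.1 ^ b i

open Finset

namespace Finsupp

variable {α : Type*}

theorem degree_mul_multinomial_sub_single {f : α →₀ ℕ} {a : α} (ha : f a ≠ 0) :
    f.degree * (f - single a 1).multinomial = f a * f.multinomial := by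
  classical
  set g := f - single a 1
  have hf : g + single a 1 = f := sub_add_single_one_cancel ha
  have hdeg : f.degree = g.degree + 1 := by rw [← hf, map_add, degree_single]
  have hfa : f a = g a + 1 := by rw [← hf, add_apply, single_eq_same]
  have hupdate : g.update a 0 = f.update a 0 := by
    ext i
    rcases eq_or_ne i a with rfl | hi <;> simp [g, update_apply, *]
  rw [multinomial_update a f, multinomial_update a g, hupdate]
  change f.degree * (g.degree.choose (g a) * _) = f a * (f.degree.choose (f a) * _)
  rw [hdeg, hfa, ← mul_assoc, Nat.add_one_mul_choose_eq, ← mul_assoc, mul_comm (g a + 1)]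

theorem multinomial_eq_sum_multinomial_sub_single {f : α →₀ ℕ} (hf : f ≠ 0) :
    f.multinomial = ∑ a ∈ f.support, (f - single a 1).multinomial := by
  have hdeg : f.degree ≠ 0 := by rwa [Ne, degree_eq_zero_iff]
  refine Nat.eq_of_mul_eq_mul_left (Nat.pos_of_ne_zero hdeg) ?_
  calc f.degree * f.multinomial = ∑ a ∈ f.support, f a * f.multinomial := by
        rw [← Finset.sum_mul, degree_apply]
    _ = _ := by
        rw [Finset.mul_sum]
        exact Finset.sum_congr rfl fun a ha =>
          (degree_mul_multinomial_sub_single (mem_support_iff.1 ha)).symm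

end Finsupp

namespace Fin

variable {n : ℕ}

noncomputable def extendByZero (b : Fin n → ℕ) : ℕ →₀ ℕ :=
  (Finsupp.equivFunOnFinite.symm b).embDomain Fin.valEmbedding

@[simp]
theorem extendByZero_apply_val (b : Fin n → ℕ) (i : Fin n) : extendByZero b i = b i :=
  Finsupp.embDomain_apply_self _ _ _

theorem extendByZero_apply_of_le (b : Fin n → ℕ) {j : ℕ} (hj : n ≤ j) : extendByZero b j = 0 :=
  Finsupp.embDomain_of_notMem_range _ _ _ fun ⟨i, hi⟩ => by
    simp only [Fin.valEmbedding_apply] at hi; omega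

theorem extendByZero_restrict {d : ℕ →₀ ℕ} (hd : ∀ j, n ≤ j → d j = 0) :
    extendByZero (fun i : Fin n => d i) = d := by
  ext j
  rcases lt_or_ge j n with hj | hj
  · exact extendByZero_apply_val _ ⟨j, hj⟩
  · rw [extendByZero_apply_of_le _ hj, hd j hj]

theorem weight_extendByZero {M : Type*} [AddCommMonoid M] (w : ℕ → M) (b : Fin n → ℕ) :
    Finsupp.weight w (extendByZero b) = ∑ i, b i • w i := by
  rw [Finsupp.weight_apply, extendByZero, Finsupp.sum_embDomain,
    Finsupp.sum_fintype _ _ (by simp)]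
  rfl

theorem multinomial_extendByZero (b : Fin n → ℕ) :
    (extendByZero b).multinomial = Nat.multinomial univ b := by
  rw [Finsupp.multinomial, extendByZero, Finsupp.sum_embDomain, Finsupp.prod_embDomain,
    Finsupp.sum_fintype _ _ fun _ => rfl, Finsupp.prod_fintype _ _ fun _ => rfl]
  rfl

theorem monomial_extendByZero {R : Type*} [CommSemiring R] (b : Fin n → ℕ) :
    monomial (extendByZero b) (1 : R) = ∏ i, X i.1 ^ b i := by
  rw [monomial_eq, C_1, one_mul, extendByZero, Finsupp.prod_embDomain,
    Finsupp.prod_fintype _ _ fun _ => pow_zero _]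
  rfl

end Fin

theorem Phi_eq_sum_monomial (n : ℕ) :
    Phi n = ∑ b ∈ (Fintype.piFinset fun _ : Fin n => range (n + 1)).filter
      (fun b => ∑ i, (i.1 + 1) * b i = n),
        (Nat.multinomial univ b : ℚ) • monomial (Fin.extendByZero b) 1 := by
  refine sum_congr rfl fun b _ => ?_
  rw [Fin.monomial_extendByZero, Nat.multinomial,
    Nat.cast_div (Nat.prod_factorial_dvd_factorial_sum _ _) (by positivity), Nat.cast_prod]

theorem coeff_Phi (n : ℕ) (d : ℕ →₀ ℕ) :
    coeff d (Phi n) = if d.weight (· + 1) = n then (d.multinomial : ℚ) else 0 := by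
  have weight_eq {b : Fin n → ℕ} (hb : Fin.extendByZero b = d) :
      d.weight (· + 1) = ∑ i, (i.1 + 1) * b i := by
    simp only [← hb, Fin.weight_extendByZero, smul_eq_mul, mul_comm]
  simp only [Phi_eq_sum_monomial, coeff_sum, coeff_smul, coeff_monomial, smul_eq_mul, mul_ite,
    mul_one, mul_zero]
  split_ifs with hd
  · have hsupp (j : ℕ) (hj : n ≤ j) : d j = 0 := by
      by_contra h
      have := Finsupp.le_weight_of_ne_zero' (fun i : ℕ => i + 1) h
      omega
    have hrestrict := Fin.extendByZero_restrict hsupp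
    rw [sum_eq_single_of_mem (fun i : Fin n => d i), if_pos hrestrict,
      ← Fin.multinomial_extendByZero, hrestrict]
    · refine mem_filter.2 ⟨Fintype.mem_piFinset.2 fun i => mem_range.2 ?_, ?_⟩
      · exact Nat.lt_succ_of_le ((Finsupp.le_weight _ (Nat.succ_ne_zero _) d).trans_eq hd)
      · rw [← weight_eq hrestrict, hd]
    · rintro b - hb
      refine if_neg fun h => hb (funext fun i => ?_)
      rw [← h, Fin.extendByZero_apply_val]
  · refine sum_eq_zero fun b hb => if_neg fun h => hd ?_
    rw [weight_eq h]
    exact (mem_filter.1 hb).2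

theorem Phi_zero : Phi 0 = 1 := by
  simp [Phi]

theorem Phi_succ (n : ℕ) : Phi (n + 1) = ∑ p ∈ antidiagonal n, X p.1 * Phi p.2 := by
  classical
  ext d
  simp only [coeff_sum, coeff_X_mul', coeff_Phi, Nat.sum_antidiagonal_eq_sum_range_succ_mk]
  have weight_eq {j : ℕ} (hj : j ∈ d.support) :
      (d - Finsupp.single j 1).weight (fun i : ℕ => i + 1) + (j + 1) = d.weight (· + 1) :=
    Finsupp.weight_sub_single_add (Finsupp.mem_support_iff.1 hj)
  -- by `weight_eq`, for `j ∈ supp d` and `j ≤ n`: `weight (d - eⱼ) = n - j ↔ weight d = n + 1`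
  split_ifs with hd
  · have hsupp : d.support ⊆ range (n + 1) := fun j hj => mem_range.2 (by grind)
    have hd0 : d ≠ 0 := by rintro rfl; simp at hd
    rw [Finsupp.multinomial_eq_sum_multinomial_sub_single hd0, Nat.cast_sum,
      ← inter_eq_right.2 hsupp, ← sum_ite_mem]
    refine sum_congr rfl fun j hj => ?_
    have := mem_range.1 hj
    grind
  · refine (sum_eq_zero fun j hj => ?_).symm
    have := mem_range.1 hj
    grind

theorem aeval_neg_Phi_Phi_succ (n : ℕ) :
    aeval (fun i : ℕ => -Phi (i + 1)) (Phi (n + 1)) = -X n := by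
  induction n using Nat.strong_induction_on with
  | _ n ih =>
  rw [Phi_succ, map_sum]
  simp only [map_mul, aeval_X]
  cases n with
  | zero => simp [Phi_succ 0, Phi_zero]
  | succ m =>
    rw [Nat.sum_antidiagonal_succ',
      sum_congr rfl fun p hp => by rw [ih p.2 (Nat.antidiagonal.snd_lt hp)],
      Phi_succ (m + 1), Nat.sum_antidiagonal_succ', ← Nat.sum_antidiagonal_swap]
    simp only [Phi_zero, map_one, Prod.fst_swap, Prod.snd_swap, mul_one, neg_mul_neg, mul_comm]
    ring

/-- For every `k ≥ 1`, substituting `−Φ_i` for `X_i` in `Φ_k` yields `−X_k`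
(where `X_k` is represented by `MvPolynomial.X (k-1)`). -/
theorem Phi_subst_neg_Phi (k : ℕ) (hk : 1 ≤ k) :
    MvPolynomial.aeval (fun i : ℕ => -Phi (i + 1)) (Phi k)
      = -(MvPolynomial.X (k - 1) : MvPolynomial ℕ ℚ) := by
  obtain ⟨n, rfl⟩ := Nat.exists_eq_add_of_le' hk
  exact aeval_neg_Phi_Phi_succ n
end

section
/- In the Connes–Kreimer Hopf algebra of rooted trees H_R, define the sequence P_1 = l_1 and P_n = l_n − Ψ_n(P_1, ..., P_{n−1}, 0) for n ≥ 2, where Ψ_n(X_1,...,X_n) = Σ_{a_1+2a_2+...+na_n = n} X_1^{a_1}...X_n^{a_n}/(a_1!...a_n!) and l_k is the ladder with k vertices. Then each P_n is a primitive element of H_R. -/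
open scoped TensorProduct
open MvPolynomial

/-- `Psi n ∈ ℚ[X_1,...,X_n]` is
`Ψ_n = Σ_{a₁ + 2a₂ + ... + n aₙ = n} X₁^{a₁}...Xₙ^{aₙ}/(a₁!...aₙ!)`,
where `X_{i+1}` is the variable `MvPolynomial.X (i : Fin n)`. -/
noncomputable def Psi (n : ℕ) : MvPolynomial (Fin n) ℚ :=
  ∑ a ∈ (Fintype.piFinset fun _ : Fin n => Finset.range (n + 1)).filter
      (fun a => ∑ i, (i.1 + 1) * a i = n),
    ((∏ i, ((a i).factorial : ℚ))⁻¹) • ∏ i, MvPolynomial.X i ^ a i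

noncomputable section
variable {A B : Type*} [CommRing A] [Algebra ℚ A] [CommRing B] [Algebra ℚ B]

/-- weight-`m` multi-indices on `Fin N` with entries `≤ N`. -/
def Tset (N m : ℕ) : Finset (Fin N → ℕ) :=
  (Fintype.piFinset fun _ : Fin N => Finset.range (N + 1)).filter
    (fun a => ∑ i, (i.1 + 1) * a i = m)

def Es (x : ℕ → A) (N m : ℕ) : A :=
  ∑ a ∈ Tset N m, (∏ i, ((a i).factorial : ℚ))⁻¹ • ∏ i, x (i.1 + 1) ^ a i

def Es0 (x : ℕ → A) (n : ℕ) : A :=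
  ∑ a ∈ (Tset n n).filter (fun a => ∀ i : Fin n, i.1 + 1 = n → a i = 0),
    (∏ i, ((a i).factorial : ℚ))⁻¹ • ∏ i, x (i.1 + 1) ^ a i

lemma mem_Tset {N m : ℕ} {a : Fin N → ℕ} :
    a ∈ Tset N m ↔ (∀ i, a i ≤ N) ∧ ∑ i, (i.1 + 1) * a i = m := by
  simp [Tset, Fintype.mem_piFinset, Nat.lt_succ_iff]

lemma mem_Tset_entry_le {N m : ℕ} {a : Fin N → ℕ} (ha : a ∈ Tset N m) (i : Fin N) :
    a i ≤ m := by
  have h1 : (i.1 + 1) * a i ≤ m := by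
    rw [← (mem_Tset.1 ha).2]
    exact Finset.single_le_sum (f := fun j : Fin N => (j.1 + 1) * a j)
      (fun j _ => Nat.zero_le _) (Finset.mem_univ i)
  calc a i ≤ (i.1 + 1) * a i := Nat.le_mul_of_pos_left _ (Nat.succ_pos _)
    _ ≤ m := h1

lemma mem_Tset_high_zero {N m : ℕ} {a : Fin N → ℕ} (ha : a ∈ Tset N m) (i : Fin N)
    (hi : m ≤ i.1) : a i = 0 := by
  by_contra h
  have h1 : (i.1 + 1) * a i ≤ m := by
    rw [← (mem_Tset.1 ha).2]
    exact Finset.single_le_sum (f := fun j : Fin N => (j.1 + 1) * a j)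
      (fun j _ => Nat.zero_le _) (Finset.mem_univ i)
  have : 1 ≤ a i := Nat.one_le_iff_ne_zero.2 h
  nlinarith

lemma Es_zero (x : ℕ → A) (N : ℕ) : Es x N 0 = 1 := by
  have h : Tset N 0 = {fun _ => 0} := by
    ext a
    simp only [mem_Tset, Finset.mem_singleton]
    constructor
    · rintro ⟨h1, h2⟩
      funext i
      exact mem_Tset_high_zero (a := a) (mem_Tset.2 ⟨h1, h2⟩) i (Nat.zero_le _)
    · rintro rfl
      simp
  simp [Es, h]

lemma Es_map (φ : A →ₐ[ℚ] B) (x : ℕ → A) (N m : ℕ) :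
    φ (Es x N m) = Es (fun k => φ (x k)) N m := by
  simp [Es, map_sum, map_smul, map_prod, map_pow]

lemma Es0_map (φ : A →ₐ[ℚ] B) (x : ℕ → A) (n : ℕ) :
    φ (Es0 x n) = Es0 (fun k => φ (x k)) n := by
  simp [Es0, map_sum, map_smul, map_prod, map_pow]

end

section helper
lemma fin_sum_ext {M : Type*} [AddCommMonoid M] {N N' : ℕ} (h : N ≤ N') (f : ℕ → M)
    (hf : ∀ i, N ≤ i → f i = 0) : ∑ i : Fin N, f i.1 = ∑ j : Fin N', f j.1 := by
  rw [Fin.sum_univ_eq_sum_range, Fin.sum_univ_eq_sum_range]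
  exact Finset.sum_subset (Finset.range_subset_range.2 h)
    (fun i _ hni => hf i (by by_contra hc; exact hni (Finset.mem_range.2 (by omega))))

lemma fin_prod_ext {M : Type*} [CommMonoid M] {N N' : ℕ} (h : N ≤ N') (f : ℕ → M)
    (hf : ∀ i, N ≤ i → f i = 1) : ∏ i : Fin N, f i.1 = ∏ j : Fin N', f j.1 := by
  rw [Fin.prod_univ_eq_prod_range, Fin.prod_univ_eq_prod_range]
  exact Finset.prod_subset (Finset.range_subset_range.2 h)
    (fun i _ hni => hf i (by by_contra hc; exact hni (Finset.mem_range.2 (by omega))))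
end helper

noncomputable section
variable {A B : Type*} [CommRing A] [Algebra ℚ A]

/-- extend a multi-index by zero -/
def extz {N N' : ℕ} (a : Fin N → ℕ) : Fin N' → ℕ :=
  fun j => if h : j.1 < N then a ⟨j.1, h⟩ else 0

lemma Es_stable (x : ℕ → A) {N N' m : ℕ} (hm : m ≤ N) (hNN' : N ≤ N') :
    Es x N m = Es x N' m := by
  classical
  refine Finset.sum_nbij' (i := fun a => (extz a : Fin N' → ℕ))
    (j := fun b => fun i : Fin N => b (Fin.castLE hNN' i)) ?_ ?_ ?_ ?_ ?_
  · intro a ha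
    obtain ⟨h1, h2⟩ := mem_Tset.1 ha
    refine mem_Tset.2 ⟨?_, ?_⟩
    · intro j
      dsimp only [extz]
      split
      · exact le_trans (h1 _) hNN'
      · exact Nat.zero_le _
    · calc ∑ j : Fin N', (j.1 + 1) * extz (N' := N') a j
          = ∑ j : Fin N', (fun i : ℕ => (i + 1) * (if h : i < N then a ⟨i, h⟩ else 0)) j.1 :=
            Finset.sum_congr rfl (fun j _ => rfl)
        _ = ∑ i : Fin N, (fun i : ℕ => (i + 1) * (if h : i < N then a ⟨i, h⟩ else 0)) i.1 :=
            (fin_sum_ext hNN' (fun i : ℕ => (i + 1) * (if h : i < N then a ⟨i, h⟩ else 0))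
              (fun i hi => by simp [Nat.not_lt.2 hi])).symm
        _ = ∑ i : Fin N, (i.1 + 1) * a i := Finset.sum_congr rfl (fun i _ => by simp)
        _ = m := h2
  · intro b hb
    obtain ⟨h1, h2⟩ := mem_Tset.1 hb
    refine mem_Tset.2 ⟨fun i => le_trans (mem_Tset_entry_le hb _) hm, ?_⟩
    have hv : ∀ i : ℕ, N ≤ i →
        (fun i : ℕ => (i + 1) * (if h : i < N' then b ⟨i, h⟩ else 0)) i = 0 := by
      intro i hi
      dsimp only
      split
      · rename_i hiN'
        have : b ⟨i, hiN'⟩ = 0 := mem_Tset_high_zero hb ⟨i, hiN'⟩ (le_trans hm hi)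
        simp [this]
      · simp
    calc ∑ i : Fin N, (i.1 + 1) * b (Fin.castLE hNN' i)
        = ∑ i : Fin N, (fun i : ℕ => (i + 1) * (if h : i < N' then b ⟨i, h⟩ else 0)) i.1 := by
          refine Finset.sum_congr rfl (fun i _ => ?_)
          dsimp only
          rw [dif_pos (lt_of_lt_of_le i.2 hNN')]
          rfl
      _ = ∑ j : Fin N', (fun i : ℕ => (i + 1) * (if h : i < N' then b ⟨i, h⟩ else 0)) j.1 :=
          fin_sum_ext hNN' _ hv
      _ = ∑ j : Fin N', (j.1 + 1) * b j := by
          refine Finset.sum_congr rfl (fun j _ => ?_)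
          dsimp only
          rw [dif_pos j.2]
      _ = m := h2
  · intro a ha
    funext i
    dsimp only [extz]
    exact dif_pos i.2
  · intro b hb
    funext j
    dsimp only [extz]
    split
    · rfl
    · rename_i hj
      exact (mem_Tset_high_zero hb j (le_trans hm (Nat.not_lt.1 hj))).symm
  · intro a ha
    congr 1
    · congr 1
      calc ∏ i : Fin N, ((a i).factorial : ℚ)
          = ∏ i : Fin N,
              (fun i : ℕ => (((if h : i < N then a ⟨i, h⟩ else 0) : ℕ).factorial : ℚ)) i.1 :=
            Finset.prod_congr rfl (fun i _ => by simp)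
        _ = ∏ j : Fin N',
              (fun i : ℕ => (((if h : i < N then a ⟨i, h⟩ else 0) : ℕ).factorial : ℚ)) j.1 :=
            fin_prod_ext hNN'
              (fun i : ℕ => (((if h : i < N then a ⟨i, h⟩ else 0) : ℕ).factorial : ℚ))
              (fun i hi => by simp [Nat.not_lt.2 hi])
        _ = ∏ j : Fin N', ((extz (N' := N') a j).factorial : ℚ) :=
            Finset.prod_congr rfl (fun j _ => rfl)
    · calc ∏ i : Fin N, x (i.1 + 1) ^ a i
          = ∏ i : Fin N, (fun i : ℕ => x (i + 1) ^ (if h : i < N then a ⟨i, h⟩ else 0)) i.1 :=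
            Finset.prod_congr rfl (fun i _ => by simp)
        _ = ∏ j : Fin N', (fun i : ℕ => x (i + 1) ^ (if h : i < N then a ⟨i, h⟩ else 0)) j.1 :=
            fin_prod_ext hNN' (fun i : ℕ => x (i + 1) ^ (if h : i < N then a ⟨i, h⟩ else 0))
              (fun i hi => by simp [Nat.not_lt.2 hi])
        _ = ∏ j : Fin N', x (j.1 + 1) ^ extz (N' := N') a j :=
            Finset.prod_congr rfl (fun j _ => rfl)
end

noncomputable section
variable {A : Type*} [CommRing A] [Algebra ℚ A]

/-- the multi-index `δ` concentrated at the top slot -/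
def topIdx (n : ℕ) : Fin n → ℕ := fun i => if i.1 + 1 = n then 1 else 0

lemma filter_not_top (n : ℕ) (hn : 1 ≤ n) :
    (Tset n n).filter (fun a => ¬ ∀ i : Fin n, i.1 + 1 = n → a i = 0) = {topIdx n} := by
  classical
  have hi0 : (n - 1) < n := by omega
  set i0 : Fin n := ⟨n - 1, hi0⟩ with hi0def
  have hi0v : i0.1 + 1 = n := by simp [hi0def]; omega
  have huniq : ∀ i : Fin n, i.1 + 1 = n → i = i0 := by
    intro i hi
    apply Fin.ext
    simp [hi0def]; omega
  ext a
  simp only [Finset.mem_filter, Finset.mem_singleton]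
  constructor
  · rintro ⟨ha, hq⟩
    push_neg at hq
    obtain ⟨i, hi, hai⟩ := hq
    obtain rfl := huniq i hi
    obtain ⟨h1, h2⟩ := mem_Tset.1 ha
    rw [← Finset.add_sum_erase _ _ (Finset.mem_univ i0)] at h2
    rw [hi0v] at h2
    have hai1 : 1 ≤ a i0 := Nat.one_le_iff_ne_zero.2 hai
    have h3 : n * a i0 ≤ n := Nat.le.intro h2
    have hai2 : a i0 ≤ 1 := by
      by_contra hc
      have : n * 2 ≤ n * a i0 := Nat.mul_le_mul_left _ (by omega)
      omega
    have hrest : ∑ i ∈ Finset.univ.erase i0, (i.1 + 1) * a i = 0 ∧ a i0 = 1 := by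
      have hA : a i0 = 1 := le_antisymm hai2 hai1
      rw [hA, mul_one] at h2
      exact ⟨by omega, hA⟩
    have hzero : ∀ i ∈ Finset.univ.erase i0, (i.1 + 1) * a i = 0 :=
      (Finset.sum_eq_zero_iff).1 hrest.1
    funext i
    by_cases h : i = i0
    · subst h
      simp [topIdx, hi0v, hrest.2]
    · have := hzero i (Finset.mem_erase.2 ⟨h, Finset.mem_univ i⟩)
      have hne : i.1 + 1 ≠ n := fun hc => h (huniq i hc)
      have hz : a i = 0 := by
        rcases Nat.mul_eq_zero.1 this with h' | h'
        · omega
        · exact h'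
      simp [topIdx, hne, hz]
  · rintro rfl
    refine ⟨mem_Tset.2 ⟨fun i => ?_, ?_⟩, ?_⟩
    · unfold topIdx; split <;> omega
    · rw [Finset.sum_eq_single i0]
      · simp [topIdx, hi0v]
      · intro i _ hne
        have : i.1 + 1 ≠ n := fun hc => hne (huniq i hc)
        simp [topIdx, this]
      · intro h; exact absurd (Finset.mem_univ i0) h
    · push_neg
      exact ⟨i0, hi0v, by simp [topIdx, hi0v]⟩

lemma Es_split (x : ℕ → A) {n : ℕ} (hn : 1 ≤ n) :
    Es x n n = x n + Es0 x n := by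
  classical
  have h := Finset.sum_filter_add_sum_filter_not (Tset n n)
    (fun a => ∀ i : Fin n, i.1 + 1 = n → a i = 0)
    (fun a => (∏ i, ((a i).factorial : ℚ))⁻¹ • ∏ i, x (i.1 + 1) ^ a i)
  have hi0 : (n - 1) < n := by omega
  have hi0v : (⟨n - 1, hi0⟩ : Fin n).1 + 1 = n := by simp; omega
  have htop : ∑ a ∈ (Tset n n).filter (fun a => ¬ ∀ i : Fin n, i.1 + 1 = n → a i = 0),
      (∏ i, ((a i).factorial : ℚ))⁻¹ • ∏ i, x (i.1 + 1) ^ a i = x n := by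
    rw [filter_not_top n hn, Finset.sum_singleton]
    have h1 : ∏ i, ((topIdx n i).factorial : ℚ) = 1 := by
      apply Finset.prod_eq_one
      intro i _
      unfold topIdx
      split <;> simp
    have h2 : ∏ i, x (i.1 + 1) ^ topIdx n i = x n := by
      rw [Finset.prod_eq_single (⟨n - 1, hi0⟩ : Fin n)]
      · simp [topIdx, hi0v]
      · intro i _ hne
        have : i.1 + 1 ≠ n := by
          intro hc
          exact hne (Fin.ext (by simp; omega))
        simp [topIdx, this]
      · intro h; exact absurd (Finset.mem_univ _) h
    rw [h1, h2]; simp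
  rw [Es, ← h, htop, Es0, add_comm]

lemma Es0_congr {x y : ℕ → A} {n : ℕ} (h : ∀ k, 1 ≤ k → k < n → x k = y k) :
    Es0 x n = Es0 y n := by
  refine Finset.sum_congr rfl (fun a ha => ?_)
  obtain ⟨-, hq⟩ := Finset.mem_filter.1 ha
  congr 1
  refine Finset.prod_congr rfl (fun i _ => ?_)
  by_cases hi : i.1 + 1 = n
  · rw [hq i hi]; simp
  · rw [h (i.1 + 1) (by omega) (by omega)]
end

noncomputable section
variable {A : Type*} [CommRing A] [Algebra ℚ A]

lemma aeval_Psi (n : ℕ) (y : Fin n → A) :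
    MvPolynomial.aeval y (Psi n)
      = ∑ a ∈ Tset n n, (∏ i, ((a i).factorial : ℚ))⁻¹ • ∏ i, y i ^ a i := by
  rw [Psi, map_sum]
  refine Finset.sum_congr rfl (fun a ha => ?_)
  rw [map_smul, map_prod]
  simp [map_pow]

lemma aeval_Psi_full (n : ℕ) (x : ℕ → A) :
    MvPolynomial.aeval (fun i : Fin n => x (i.1 + 1)) (Psi n) = Es x n n := by
  rw [aeval_Psi]; rfl

lemma aeval_Psi_trunc {n : ℕ} (hn : 1 ≤ n) (x : ℕ → A) :
    MvPolynomial.aeval (fun i : Fin n => if i.1 + 1 = n then 0 else x (i.1 + 1)) (Psi n)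
      = Es0 x n := by
  classical
  rw [aeval_Psi,
    ← Finset.sum_filter_add_sum_filter_not (Tset n n)
      (fun a => ∀ i : Fin n, i.1 + 1 = n → a i = 0)]
  have h2 : ∑ a ∈ (Tset n n).filter (fun a => ¬ ∀ i : Fin n, i.1 + 1 = n → a i = 0),
      (∏ i, ((a i).factorial : ℚ))⁻¹ •
        ∏ i, (if i.1 + 1 = n then (0 : A) else x (i.1 + 1)) ^ a i = 0 := by
    rw [filter_not_top n hn, Finset.sum_singleton]
    have hi0 : (n - 1) < n := by omega
    have hi0v : ((⟨n - 1, hi0⟩ : Fin n) : ℕ) + 1 = n := by simp; omega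
    have : ∏ i, (if i.1 + 1 = n then (0 : A) else x (i.1 + 1)) ^ topIdx n i = 0 := by
      apply Finset.prod_eq_zero (Finset.mem_univ (⟨n - 1, hi0⟩ : Fin n))
      rw [if_pos hi0v]
      simp [topIdx, hi0v]
    rw [this, smul_zero]
  rw [h2, add_zero, Es0]
  refine Finset.sum_congr rfl (fun a ha => ?_)
  obtain ⟨-, hq⟩ := Finset.mem_filter.1 ha
  congr 1
  refine Finset.prod_congr rfl (fun i _ => ?_)
  by_cases hi : i.1 + 1 = n
  · rw [hq i hi]; simp
  · rw [if_neg hi]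
end

noncomputable section
variable {A : Type*} [CommRing A] [Algebra ℚ A]

lemma smul_mul_smul' (a c : ℚ) (b d : A) : (a • b) * (c • d) = (a * c) • (b * d) := by
  rw [smul_mul_assoc, mul_smul_comm, smul_smul]

lemma coeff_id {N : ℕ} (a b : Fin N → ℕ) (hb : ∀ i, b i ≤ a i) :
    (∏ i, ((a i).factorial : ℚ))⁻¹ * ∏ i, ((a i).choose (b i) : ℚ)
      = (∏ i, ((b i).factorial : ℚ))⁻¹ * (∏ i, ((a i - b i).factorial : ℚ))⁻¹ := by
  rw [← Finset.prod_inv_distrib, ← Finset.prod_mul_distrib,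
      ← Finset.prod_inv_distrib, ← Finset.prod_inv_distrib, ← Finset.prod_mul_distrib]
  refine Finset.prod_congr rfl (fun i _ => ?_)
  rw [Nat.cast_choose ℚ (hb i)]
  have h1 : ((a i).factorial : ℚ) ≠ 0 := Nat.cast_ne_zero.2 (Nat.factorial_ne_zero _)
  have h2 : ((b i).factorial : ℚ) ≠ 0 := Nat.cast_ne_zero.2 (Nat.factorial_ne_zero _)
  have h3 : ((a i - b i).factorial : ℚ) ≠ 0 := Nat.cast_ne_zero.2 (Nat.factorial_ne_zero _)
  field_simp

lemma Es_conv (x y : ℕ → A) {N m : ℕ} (hm : m ≤ N) :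
    Es (fun k => x k + y k) N m
      = ∑ j ∈ Finset.range (m + 1), Es x N j * Es y N (m - j) := by
  classical
  set g : (Fin N → ℕ) × (Fin N → ℕ) → A := fun p =>
    ((∏ i, ((p.1 i).factorial : ℚ))⁻¹ * (∏ i, ((p.2 i).factorial : ℚ))⁻¹) •
      ((∏ i, x (i.1 + 1) ^ p.1 i) * (∏ i, y (i.1 + 1) ^ p.2 i)) with hg
  set Q : Finset ((Fin N → ℕ) × (Fin N → ℕ)) :=
    ((Fintype.piFinset fun _ : Fin N => Finset.range (N + 1)) ×ˢ
     (Fintype.piFinset fun _ : Fin N => Finset.range (N + 1))).filter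
      (fun p => (∑ i, (i.1 + 1) * p.1 i) + ∑ i, (i.1 + 1) * p.2 i = m) with hQ
  have hprod : ∀ j, Es x N j * Es y N (m - j)
      = ∑ p ∈ (Tset N j) ×ˢ (Tset N (m - j)), g p := by
    intro j
    rw [Es, Es, Finset.sum_mul_sum, Finset.sum_product]
    exact Finset.sum_congr rfl fun b _ => Finset.sum_congr rfl fun c _ =>
      smul_mul_smul' _ _ _ _
  have hfib : ∀ j ∈ Finset.range (m + 1),
      Q.filter (fun p => ∑ i, (i.1 + 1) * p.1 i = j) = Tset N j ×ˢ Tset N (m - j) := by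
    intro j hj
    have hjm : j ≤ m := Nat.lt_succ_iff.1 (Finset.mem_range.1 hj)
    ext p
    simp only [hQ, Finset.mem_filter, Finset.mem_product, mem_Tset,
      Fintype.mem_piFinset, Finset.mem_range, Nat.lt_succ_iff]
    constructor
    · rintro ⟨⟨⟨hp1, hp2⟩, hsum⟩, hw1⟩
      exact ⟨⟨hp1, hw1⟩, hp2, by omega⟩
    · rintro ⟨⟨hp1, hw1⟩, hp2, hw2⟩
      exact ⟨⟨⟨hp1, hp2⟩, by omega⟩, hw1⟩
  have hRHS : ∑ j ∈ Finset.range (m + 1), Es x N j * Es y N (m - j) = ∑ p ∈ Q, g p := by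
    rw [← Finset.sum_fiberwise_of_maps_to (g := fun p => ∑ i, (i.1 + 1) * p.1 i)
      (t := Finset.range (m + 1)) (fun p hp => ?_) g]
    · exact Finset.sum_congr rfl fun j hj => by rw [hprod j, hfib j hj]
    · obtain ⟨-, hw⟩ := Finset.mem_filter.1 hp
      exact Finset.mem_range.2 (by omega)
  rw [hRHS, Es]
  have expand : ∀ a ∈ Tset N m,
      (∏ i, ((a i).factorial : ℚ))⁻¹ • ∏ i, (fun k => x k + y k) (i.1 + 1) ^ a i
        = ∑ b ∈ Fintype.piFinset (fun i => Finset.range (a i + 1)),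
            (∏ i, ((a i).factorial : ℚ))⁻¹ •
              ∏ i, (x (i.1 + 1) ^ b i * y (i.1 + 1) ^ (a i - b i)
                * (((a i).choose (b i) : ℕ) : A)) := by
    intro a ha
    rw [← Finset.smul_sum]
    congr 1
    calc (∏ i, (fun k => x k + y k) (i.1 + 1) ^ a i)
        = ∏ i, ∑ k ∈ Finset.range (a i + 1),
            x (i.1 + 1) ^ k * y (i.1 + 1) ^ (a i - k) * (((a i).choose k : ℕ) : A) :=
          Finset.prod_congr rfl fun i _ => by dsimp only; rw [add_pow]
      _ = ∑ b ∈ Fintype.piFinset (fun i => Finset.range (a i + 1)),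
            ∏ i, (x (i.1 + 1) ^ b i * y (i.1 + 1) ^ (a i - b i)
              * (((a i).choose (b i) : ℕ) : A)) :=
          Finset.prod_univ_sum _ _
  rw [Finset.sum_congr rfl expand, Finset.sum_sigma']
  refine Finset.sum_nbij' (i := fun p => (p.2, fun i => p.1 i - p.2 i))
    (j := fun q => ⟨fun i => q.1 i + q.2 i, q.1⟩) ?_ ?_ ?_ ?_ ?_
  · rintro ⟨a, b⟩ h
    obtain ⟨ha, hb⟩ := Finset.mem_sigma.1 h
    dsimp only at ha hb
    obtain ⟨haN, haw⟩ := mem_Tset.1 ha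
    have hba : ∀ i, b i ≤ a i := fun i =>
      Nat.lt_succ_iff.1 (Finset.mem_range.1 (Fintype.mem_piFinset.1 hb i))
    refine Finset.mem_filter.2 ⟨Finset.mem_product.2 ⟨?_, ?_⟩, ?_⟩
    · exact Fintype.mem_piFinset.2 fun i => Finset.mem_range.2
        (Nat.lt_succ_iff.2 (le_trans (hba i) (haN i)))
    · exact Fintype.mem_piFinset.2 fun i => Finset.mem_range.2
        (Nat.lt_succ_iff.2 (le_trans (Nat.sub_le _ _) (haN i)))
    · dsimp only
      rw [← Finset.sum_add_distrib, ← haw]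
      refine Finset.sum_congr rfl fun i _ => ?_
      have h' := hba i
      rw [← Nat.mul_add]
      congr 1
      omega
  · rintro ⟨b, c⟩ h
    obtain ⟨hmem, hw⟩ := Finset.mem_filter.1 h
    obtain ⟨hb, hc⟩ := Finset.mem_product.1 hmem
    have hbw : ∀ i, (i.1 + 1) * b i ≤ ∑ i, (i.1 + 1) * b i := fun i =>
      Finset.single_le_sum (f := fun j : Fin N => (j.1 + 1) * b j)
        (fun j _ => Nat.zero_le _) (Finset.mem_univ i)
    have hcw : ∀ i, (i.1 + 1) * c i ≤ ∑ i, (i.1 + 1) * c i := fun i =>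
      Finset.single_le_sum (f := fun j : Fin N => (j.1 + 1) * c j)
        (fun j _ => Nat.zero_le _) (Finset.mem_univ i)
    dsimp only at hw
    refine Finset.mem_sigma.2 ⟨mem_Tset.2 ⟨fun i => ?_, ?_⟩, ?_⟩
    · have h1 := hbw i; have h2 := hcw i
      have : b i ≤ (i.1 + 1) * b i := Nat.le_mul_of_pos_left _ (Nat.succ_pos _)
      have : c i ≤ (i.1 + 1) * c i := Nat.le_mul_of_pos_left _ (Nat.succ_pos _)
      dsimp only at hw ⊢
      omega
    · dsimp only at hw ⊢
      rw [← hw, ← Finset.sum_add_distrib]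
      exact Finset.sum_congr rfl fun i _ => by rw [Nat.mul_add]
    · refine Fintype.mem_piFinset.2 fun i => Finset.mem_range.2 ?_
      dsimp only
      omega
  · rintro ⟨a, b⟩ h
    obtain ⟨ha, hb⟩ := Finset.mem_sigma.1 h
    have hba : ∀ i, b i ≤ a i := fun i =>
      Nat.lt_succ_iff.1 (Finset.mem_range.1 (Fintype.mem_piFinset.1 hb i))
    have h1 : (fun i => b i + (a i - b i)) = a := funext fun i => by
      have := hba i; omega
    dsimp only
    rw [h1]
  · rintro ⟨b, c⟩ h
    have h1 : (fun i => b i + c i - b i) = c := funext fun i => by omega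
    dsimp only
    rw [h1]
  · rintro ⟨a, b⟩ h
    obtain ⟨ha, hb⟩ := Finset.mem_sigma.1 h
    have hba : ∀ i, b i ≤ a i := fun i =>
      Nat.lt_succ_iff.1 (Finset.mem_range.1 (Fintype.mem_piFinset.1 hb i))
    have hC : (∏ i, (((a i).choose (b i) : ℕ) : A)) = ((∏ i, (a i).choose (b i) : ℕ) : A) :=
      (Nat.cast_prod _ _).symm
    dsimp only [hg]
    rw [Finset.prod_mul_distrib, Finset.prod_mul_distrib, hC,
      mul_comm _ (((∏ i, (a i).choose (b i) : ℕ) : A)), ← nsmul_eq_mul,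
      ← Nat.cast_smul_eq_nsmul ℚ, smul_smul]
    congr 1
    rw [Nat.cast_prod]
    exact coeff_id a b hba

end

noncomputable section
variable {A : Type*} [CommRing A] [Algebra ℚ A]

lemma Es0_one (x : ℕ → A) : Es0 x 1 = 0 := by
  have hempty : (Tset 1 1).filter (fun a => ∀ i : Fin 1, i.1 + 1 = 1 → a i = 0) = ∅ := by
    ext a
    simp only [Finset.mem_filter, mem_Tset, Finset.notMem_empty, iff_false, not_and]
    rintro ⟨h1, h2⟩ hq
    have h3 := hq 0 (by norm_num)
    rw [Fin.sum_univ_one] at h2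
    simp [h3] at h2
  rw [Es0, hempty, Finset.sum_empty]
end

/-- In the Connes–Kreimer Hopf algebra of rooted trees — here axiomatized through the
ladders `l_n`, `l_0 = 1`, with the cut coproduct `Δ(l_n) = Σ_{j=0}^{n} l_j ⊗ l_{n-j}` —
the elements defined by `P_1 = l_1`, `P_n = l_n − Ψ_n(P_1, ..., P_{n−1}, 0)` for
`n ≥ 2` are all primitive. -/
theorem ladder_P_primitive
    (H : Type*) [CommRing H] [Bialgebra ℚ H]
    (l : ℕ → H) (hl0 : l 0 = 1)
    (hl : ∀ n,
      (Coalgebra.comul (l n) : H ⊗[ℚ] H)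
        = ∑ j ∈ Finset.range (n + 1), l j ⊗ₜ[ℚ] l (n - j))
    (P : ℕ → H) (hP1 : P 1 = l 1)
    (hPrec : ∀ n, 2 ≤ n →
      P n = l n - MvPolynomial.aeval
        (fun i : Fin n => if i.1 + 1 = n then 0 else P (i.1 + 1)) (Psi n)) :
    ∀ n, 1 ≤ n →
      (Coalgebra.comul (P n) : H ⊗[ℚ] H) = P n ⊗ₜ[ℚ] 1 + 1 ⊗ₜ[ℚ] P n := by
  intro n
  induction n using Nat.strong_induction_on with
  | _ n IH =>
  intro hn
  -- l j = Es P j j for 1 ≤ j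
  have hkey : ∀ j, 1 ≤ j → l j = Es P j j := by
    intro j hj
    rcases eq_or_lt_of_le hj with h1 | h2
    · subst h1
      rw [Es_split P le_rfl, Es0_one, add_zero, hP1]
    · have hj2 : 2 ≤ j := h2
      rw [Es_split P hj, hPrec j hj2, aeval_Psi_trunc hj P]
      ring
  have hkey' : ∀ j, j ≤ n → l j = Es P n j := by
    intro j hj
    rcases Nat.eq_zero_or_pos j with rfl | hj1
    · rw [hl0, Es_zero]
    · rw [hkey j hj1, Es_stable P le_rfl hj]
  rcases eq_or_lt_of_le hn with h1 | h2
  · -- n = 1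
    subst h1
    rw [hP1, hl 1, Finset.sum_range_succ, Finset.sum_range_one, hl0]
    norm_num
    rw [add_comm]
  · -- 2 ≤ n
    have h2' : 2 ≤ n := h2
    set D := Bialgebra.comulAlgHom ℚ H with hD
    set u : ℕ → H ⊗[ℚ] H := fun k => P k ⊗ₜ[ℚ] 1 with hu
    set v : ℕ → H ⊗[ℚ] H := fun k => 1 ⊗ₜ[ℚ] P k with hv
    have htensor : ∀ j, j ≤ n → (l j) ⊗ₜ[ℚ] (l (n - j)) = Es u n j * Es v n (n - j) := by
      intro j hj
      have e1 : (l j) ⊗ₜ[ℚ] (1 : H) = Es u n j := by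
        have := Es_map (Algebra.TensorProduct.includeLeft (R := ℚ) (S := ℚ)
          (A := H) (B := H)) P n j
        rw [hkey' j hj]
        simpa using this
      have e2 : (1 : H) ⊗ₜ[ℚ] (l (n - j)) = Es v n (n - j) := by
        have := Es_map (Algebra.TensorProduct.includeRight (R := ℚ) (A := H) (B := H))
          P n (n - j)
        rw [hkey' (n - j) (Nat.sub_le _ _)]
        simpa using this
      rw [← e1, ← e2, Algebra.TensorProduct.tmul_mul_tmul, mul_one, one_mul]
    have hDl : D (l n) = ∑ j ∈ Finset.range (n + 1), Es u n j * Es v n (n - j) := by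
      rw [Bialgebra.comulAlgHom_apply, hl n]
      exact Finset.sum_congr rfl fun j hj =>
        htensor j (Nat.lt_succ_iff.1 (Finset.mem_range.1 hj))
    have hconv : ∑ j ∈ Finset.range (n + 1), Es u n j * Es v n (n - j)
        = Es (fun k => u k + v k) n n := (Es_conv u v le_rfl).symm
    have hsplit : Es (fun k => u k + v k) n n
        = (u n + v n) + Es0 (fun k => u k + v k) n := Es_split _ (by omega)
    have hcongr : Es0 (fun k => u k + v k) n = Es0 (fun k => D (P k)) n := by
      refine Es0_congr fun k hk1 hk2 => ?_
      rw [hD, Bialgebra.comulAlgHom_apply]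
      exact (IH k hk2 hk1).symm
    have hD0 : D (Es0 P n) = Es0 (fun k => D (P k)) n := Es0_map D P n
    have hPn : P n = l n - Es0 P n := by
      rw [hPrec n h2', aeval_Psi_trunc (by omega) P]
    have hfinal : D (P n) = u n + v n := by
      rw [hPn, map_sub, hDl, hconv, hsplit, hcongr, hD0]
      ring
    calc (Coalgebra.comul (P n) : H ⊗[ℚ] H) = D (P n) :=
          (Bialgebra.comulAlgHom_apply ℚ H (P n)).symm
      _ = P n ⊗ₜ[ℚ] 1 + 1 ⊗ₜ[ℚ] P n := hfinal
end

section
/- Any finite-dimensional (left) comodule C over a graded connected Hopf algebra whose graded dual is an enveloping algebra of a graded Lie algebra concentrated in positive degrees (such as the Connes–Kreimer Hopf algebra of rooted trees H_R) admits a complete flag of subcomodules: there exist subcomodules C^(1) ⊂ C^(2) ⊂ ... ⊂ C^(n) = C with dim C^(i) = i, where n = dim C. -/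
/-!
Let `F k ⊆ C` be the set of `x` with `ρ x ∈ (⨁_{j<k} 𝒜 j) ⊗ C`. Counitality gives `F 0 = 0`,
finite dimensionality gives `F k = C` for large `k`, and connectedness with homogeneity of `Δ`
and coassociativity give `ρ x ≡ 1 ⊗ x` modulo `H ⊗ F k` for `x ∈ F (k + 1)`. Hence, if `V` is a
proper subcomodule and `k + 1` is least with `F (k + 1) ⊄ V`, any `y ∈ F (k + 1) \ V` has
`ρ y ∈ 1 ⊗ y + H ⊗ V`, so `V + span {y}` is a subcomodule of one dimension more. Iterating
from `0` builds the flag.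
-/

open scoped TensorProduct
open LinearMap TensorProduct Filter Module

namespace GradedAlgebra

variable {R A : Type*} [CommRing R] [Ring A] [Algebra R A]
  (𝒜 : ℕ → Submodule R A) [GradedAlgebra 𝒜]

def projGE (k : ℕ) : A →ₗ[R] A := LinearMap.id - ∑ j ∈ Finset.range k, proj 𝒜 j

variable {𝒜}

@[simp]
theorem projGE_zero : projGE 𝒜 0 = LinearMap.id := by
  simp [projGE]

theorem projGE_of_mem_of_lt {a : A} {m k : ℕ} (ha : a ∈ 𝒜 m) (hmk : m < k) :
    projGE 𝒜 k a = 0 := by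
  rw [projGE, LinearMap.sub_apply, id_apply, coe_sum, Finset.sum_apply,
    Finset.sum_eq_single_of_mem m (Finset.mem_range.2 hmk)
      fun j _ hj => by simp [DirectSum.decompose_of_mem_ne 𝒜 ha (Ne.symm hj)],
    proj_apply, DirectSum.decompose_of_mem_same 𝒜 ha, sub_self]

variable (𝒜) in
theorem eventually_projGE_eq_zero (a : A) : ∀ᶠ k in atTop, projGE 𝒜 k a = 0 := by
  induction a using DirectSum.Decomposition.inductionOn 𝒜 with
  | zero => simp
  | homogeneous a =>
    exact eventually_atTop.2 ⟨_, fun k hk => projGE_of_mem_of_lt a.2 (Nat.lt_of_succ_le hk)⟩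
  | add a b ha hb => filter_upwards [ha, hb] with k ha hb using by rw [map_add, ha, hb, add_zero]

variable (𝒜) in
theorem eventually_rTensor_projGE_eq_zero {M : Type*} [AddCommGroup M] [Module R M]
    (t : A ⊗[R] M) : ∀ᶠ k in atTop, rTensor M (projGE 𝒜 k) t = 0 := by
  induction t using TensorProduct.induction_on with
  | zero => simp
  | tmul a m =>
    filter_upwards [eventually_projGE_eq_zero 𝒜 a] with k hk
    rw [rTensor_tmul, hk, zero_tmul]
  | add s t hs ht => filter_upwards [hs, ht] with k hs ht using by rw [map_add, hs, ht, add_zero]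

theorem comp_projGE_eq_self {M : Type*} [AddCommGroup M] [Module R M] (f : A →ₗ[R] M) {k : ℕ}
    (hf : ∀ m < k, ∀ a ∈ 𝒜 m, f a = 0) : f ∘ₗ projGE 𝒜 k = f := by
  ext a
  have hlow : ∑ j ∈ Finset.range k, f (proj 𝒜 j a) = 0 :=
    Finset.sum_eq_zero fun j hj => hf j (Finset.mem_range.1 hj) _ (SetLike.coe_mem _)
  simpa [projGE, map_sub, map_sum] using hlow

end GradedAlgebra

section Bialgebra

open Coalgebra GradedAlgebra

variable {R A : Type*} [CommRing R] [Ring A] [Bialgebra R A]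

theorem Bialgebra.algebraMap_counit_of_mem_span_one {a : A} (ha : a ∈ R ∙ (1 : A)) :
    algebraMap R A (counit a) = a := by
  obtain ⟨r, rfl⟩ := Submodule.mem_span_singleton.1 ha
  simp [Algebra.algebraMap_eq_smul_one]

variable (𝒜 : ℕ → Submodule R A)

def IsGradedComul : Prop :=
  ∀ n : ℕ, ∀ x ∈ 𝒜 n, comul x ∈ ⨆ p ∈ Finset.HasAntidiagonal.antidiagonal n,
    range (TensorProduct.map (𝒜 p.1).subtype (𝒜 p.2).subtype)

variable {𝒜}

theorem IsGradedComul.map_comul_eq_zero (hΔ : IsGradedComul 𝒜) {n : ℕ} {x : A} (hx : x ∈ 𝒜 n)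
    {M : Type*} [AddCommGroup M] [Module R M] (L : A ⊗[R] A →ₗ[R] M)
    (hL : ∀ p q, p + q = n → ∀ a ∈ 𝒜 p, ∀ b ∈ 𝒜 q, L (a ⊗ₜ b) = 0) : L (comul x) = 0 := by
  have hker : (⨆ p ∈ Finset.HasAntidiagonal.antidiagonal n,
      range (TensorProduct.map (𝒜 p.1).subtype (𝒜 p.2).subtype)) ≤ ker L :=
    iSup₂_le fun p hp => range_le_ker_iff.2 <| TensorProduct.ext' fun a b =>
      hL p.1 p.2 (Finset.HasAntidiagonal.mem_antidiagonal.1 hp) a a.2 b b.2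
  exact hker (hΔ n x hx)

/-- A term `a ⊗ b` of `Δ x` with `deg a > 0` has `deg b < k`, and `a ∈ 𝒜 0 = R ∙ 1` is `ε a • 1`. -/
theorem IsGradedComul.lTensor_projGE_comul [GradedAlgebra 𝒜] (hconn : 𝒜 0 = R ∙ 1)
    (hΔ : IsGradedComul 𝒜) {m k : ℕ} (hmk : m ≤ k) {x : A} (hx : x ∈ 𝒜 m) :
    lTensor A (projGE 𝒜 k) (comul x) = 1 ⊗ₜ projGE 𝒜 k x := by
  have hsplit : lTensor A (projGE 𝒜 k) (comul x) =
      TensorProduct.map (Algebra.linearMap R A ∘ₗ counit) (projGE 𝒜 k) (comul x) := by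
    rw [← sub_eq_zero, ← LinearMap.sub_apply]
    refine hΔ.map_comul_eq_zero hx _ fun p q hpq a ha b hb => ?_
    rcases Nat.eq_zero_or_pos p with rfl | hp
    · rw [hconn] at ha
      simp [Bialgebra.algebraMap_counit_of_mem_span_one ha]
    · simp [projGE_of_mem_of_lt hb (show q < k by omega)]
  have hcounit : TensorProduct.map (Algebra.linearMap R A ∘ₗ counit) (projGE 𝒜 k) =
      TensorProduct.mk R A A 1 ∘ₗ projGE 𝒜 k ∘ₗ (TensorProduct.lid R A).toLinearMap ∘ₗ
        rTensor A (counit (R := R) (A := A)) := by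
    ext a b
    simp [Algebra.algebraMap_eq_smul_one, TensorProduct.smul_tmul]
  rw [hsplit, hcounit]
  simp [rTensor_counit_comul]

end Bialgebra

section Comodule

open Coalgebra GradedAlgebra

variable {K H C : Type*} [Field K] [Ring H] [Bialgebra K H] [AddCommGroup C] [Module K C]
  (𝒜 : ℕ → Submodule K H) [GradedAlgebra 𝒜] (ρ : C →ₗ[K] H ⊗[K] C)

def IsSubcomodule (V : Submodule K C) : Prop :=
  ∀ x ∈ V, ρ x ∈ range (lTensor H V.subtype)

theorem isSubcomodule_bot : IsSubcomodule ρ ⊥ := fun x hx => by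
  rw [(Submodule.mem_bot K).1 hx, map_zero]
  exact zero_mem _

theorem range_lTensor_subtype_mono {V W : Submodule K C} (hVW : V ≤ W) :
    range (lTensor H V.subtype) ≤ range (lTensor H W.subtype) := by
  rw [← V.subtype_comp_inclusion W hVW, lTensor_comp]
  exact range_comp_le_range _ _

variable {ρ} in
theorem IsSubcomodule.sup_span_singleton {V : Submodule K C} (hV : IsSubcomodule ρ V) {y : C}
    (hy : ρ y - 1 ⊗ₜ y ∈ range (lTensor H V.subtype)) :
    IsSubcomodule ρ (V ⊔ K ∙ y) := by
  have hle := range_lTensor_subtype_mono (H := H) (le_sup_left : V ≤ V ⊔ K ∙ y)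
  show V ⊔ K ∙ y ≤ (range (lTensor H (V ⊔ K ∙ y).subtype)).comap ρ
  refine sup_le (fun x hx => hle (hV x hx)) ((Submodule.span_singleton_le_iff_mem _ _).2 ?_)
  have hy' : (1 : H) ⊗ₜ[K] y ∈ range (lTensor H (V ⊔ K ∙ y).subtype) :=
    ⟨1 ⊗ₜ ⟨y, Submodule.mem_sup_right (Submodule.mem_span_singleton_self y)⟩, rfl⟩
  simpa using add_mem (hle hy) hy'

/-- `x ∈ coradicalFiltration 𝒜 ρ k` iff `ρ x ∈ (⨁_{j < k} 𝒜 j) ⊗ C`. -/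
def coradicalFiltration (k : ℕ) : Submodule K C :=
  ker (rTensor C (projGE 𝒜 k) ∘ₗ ρ)

variable {ρ}

theorem coradicalFiltration_zero
    (hcounit : ∀ x, TensorProduct.lid K C (rTensor C counit (ρ x)) = x) :
    coradicalFiltration 𝒜 ρ 0 = ⊥ := by
  refine eq_bot_iff.2 fun x hx => ?_
  replace hx : ρ x = 0 := by simpa [coradicalFiltration] using hx
  simpa [hx] using (hcounit x).symm

variable (ρ) in
theorem eventually_coradicalFiltration_eq_top [FiniteDimensional K C] :
    ∀ᶠ k in atTop, coradicalFiltration 𝒜 ρ k = ⊤ := by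
  let b := Module.finBasis K C
  filter_upwards [eventually_all.2 fun i => eventually_rTensor_projGE_eq_zero 𝒜 (ρ (b i))]
    with k hk
  have : rTensor C (projGE 𝒜 k) ∘ₗ ρ = 0 := b.ext hk
  simp [coradicalFiltration, this]

theorem one_tmul_eq_assoc_rTensor_mk (t : H ⊗[K] C) :
    (1 : H) ⊗ₜ t = TensorProduct.assoc K H H C (rTensor C (TensorProduct.mk K H H 1) t) := by
  induction t using TensorProduct.induction_on with
  | zero => simp
  | tmul a c => rfl
  | add s t hs ht => rw [tmul_add, hs, ht, map_add, map_add]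

theorem sub_one_tmul_mem_range_coradicalFiltration (hconn : 𝒜 0 = K ∙ 1)
    (hΔ : IsGradedComul 𝒜)
    (hcoassoc : ∀ x, TensorProduct.assoc K H H C (rTensor C comul (ρ x)) = lTensor H ρ (ρ x))
    {k : ℕ} {x : C} (hx : x ∈ coradicalFiltration 𝒜 ρ (k + 1)) :
    ρ x - 1 ⊗ₜ x ∈ range (lTensor H (coradicalFiltration 𝒜 ρ k).subtype) := by
  set Φ : H →ₗ[K] H ⊗[K] H :=
    lTensor H (projGE 𝒜 k) ∘ₗ comul - TensorProduct.mk K H H 1 ∘ₗ projGE 𝒜 k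
  have hΦ : Φ ∘ₗ projGE 𝒜 (k + 1) = Φ := comp_projGE_eq_self Φ fun m hm a ha => by
    simp [Φ, hΔ.lTensor_projGE_comul hconn (Nat.lt_succ_iff.1 hm) ha]
  have hcomul : lTensor H (rTensor C (projGE 𝒜 k) ∘ₗ ρ) (ρ x) =
      TensorProduct.assoc K H H C (rTensor C (lTensor H (projGE 𝒜 k) ∘ₗ comul) (ρ x)) := by
    rw [lTensor_comp, comp_apply, ← hcoassoc, rTensor_comp, comp_apply]
    exact LinearMap.congr_fun (lTensor_rTensor_comp_assoc _ (projGE 𝒜 k)) _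
  have hunit : lTensor H (rTensor C (projGE 𝒜 k) ∘ₗ ρ) (1 ⊗ₜ x) =
      TensorProduct.assoc K H H C (rTensor C (TensorProduct.mk K H H 1 ∘ₗ projGE 𝒜 k) (ρ x)) := by
    rw [lTensor_tmul, one_tmul_eq_assoc_rTensor_mk, rTensor_comp]
    rfl
  have hdefect : lTensor H (rTensor C (projGE 𝒜 k) ∘ₗ ρ) (ρ x - 1 ⊗ₜ x) =
      TensorProduct.assoc K H H C (rTensor C Φ (ρ x)) := by
    rw [map_sub, hcomul, hunit, ← map_sub, ← LinearMap.sub_apply, ← rTensor_sub]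
  have hzero : rTensor C Φ (ρ x) = 0 := by
    have hx' : rTensor C (projGE 𝒜 (k + 1)) (ρ x) = 0 := hx
    rw [← hΦ, rTensor_comp, comp_apply, hx', map_zero]
  exact (Module.Flat.lTensor_exact H (exact_subtype_ker_map _) _).1
    (by rw [hdefect, hzero, map_zero])

theorem IsSubcomodule.exists_finrank_succ [FiniteDimensional K C] (hconn : 𝒜 0 = K ∙ 1)
    (hΔ : IsGradedComul 𝒜)
    (hcoassoc : ∀ x, TensorProduct.assoc K H H C (rTensor C comul (ρ x)) = lTensor H ρ (ρ x))
    (hcounit : ∀ x, TensorProduct.lid K C (rTensor C counit (ρ x)) = x)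
    {V : Submodule K C} (hV : IsSubcomodule ρ V) (hne : V ≠ ⊤) :
    ∃ W, V ≤ W ∧ finrank K W = finrank K V + 1 ∧ IsSubcomodule ρ W := by
  classical
  have hex : ∃ k, ¬coradicalFiltration 𝒜 ρ k ≤ V := by
    obtain ⟨k, hk⟩ := (eventually_coradicalFiltration_eq_top 𝒜 ρ).exists
    exact ⟨k, by rwa [hk, top_le_iff]⟩
  obtain ⟨k, hk⟩ : ∃ k, Nat.find hex = k + 1 := by
    refine Nat.exists_eq_succ_of_ne_zero fun h0 => Nat.find_spec hex ?_
    simp [h0, coradicalFiltration_zero 𝒜 hcounit]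
  have hlow : coradicalFiltration 𝒜 ρ k ≤ V := not_not.1 (Nat.find_min hex (by omega))
  obtain ⟨y, hy, hyV⟩ := SetLike.not_le_iff_exists.1 (hk ▸ Nat.find_spec hex)
  exact ⟨V ⊔ K ∙ y, le_sup_left, Submodule.finrank_sup_span_singleton hyV,
    hV.sup_span_singleton <| range_lTensor_subtype_mono hlow <|
      sub_one_tmul_mem_range_coradicalFiltration 𝒜 hconn hΔ hcoassoc hy⟩

end Comodule

theorem Submodule.exists_complete_flag {K V : Type*} [DivisionRing K] [AddCommGroup V]
    [Module K V] [FiniteDimensional K V] (P : Submodule K V → Prop) (hbot : P ⊥)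
    (hstep : ∀ W, P W → W ≠ ⊤ → ∃ W', W ≤ W' ∧ finrank K W' = finrank K W + 1 ∧ P W') :
    ∃ D : Fin (finrank K V + 1) → Submodule K V, Monotone D ∧
      (∀ i, finrank K (D i) = i) ∧ D (Fin.last _) = ⊤ ∧ ∀ i, P (D i) := by
  choose! E hE using hstep
  have hflag : ∀ i ≤ finrank K V, finrank K (E^[i] ⊥) = i ∧ P (E^[i] ⊥) := by
    intro i hi
    induction i with
    | zero => exact ⟨finrank_bot K V, hbot⟩
    | succ i ih =>
      obtain ⟨hrank, hP⟩ := ih (by omega)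
      have hne : E^[i] ⊥ ≠ ⊤ := fun h => by rw [h, finrank_top] at hrank; omega
      obtain ⟨-, hrank', hP'⟩ := hE _ hP hne
      rw [Function.iterate_succ_apply']
      exact ⟨by omega, hP'⟩
  refine ⟨fun i => E^[i] ⊥, Fin.monotone_iff_le_succ.2 fun i => ?_, fun i => (hflag i i.is_le).1,
    Submodule.eq_top_of_finrank_eq (by simpa using (hflag _ le_rfl).1),
    fun i => (hflag i i.is_le).2⟩
  obtain ⟨hrank, hP⟩ := hflag i (by omega)
  have hne : E^[i] ⊥ ≠ ⊤ := fun h => by rw [h, finrank_top] at hrank; omega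
  simpa [Function.iterate_succ_apply'] using (hE _ hP hne).1

/-- Any finite-dimensional left comodule `C` over a graded connected Hopf algebra `H`
over `ℚ` whose graded dual is the enveloping algebra of a Lie algebra graded in
positive degrees — here axiomatized by the grading, connectedness and homogeneity of
the coproduct, as for the Connes–Kreimer Hopf algebra of rooted trees — admits a
complete flag of subcomodules: there are subcomodules `D 0 ⊆ D 1 ⊆ ... ⊆ D n = C`
with `dim (D i) = i`, where `n = dim C`. -/
theorem finite_dimensional_comodule_has_complete_flag
    (H : Type*) [CommRing H] [HopfAlgebra ℚ H]
    (𝒜 : ℕ → Submodule ℚ H) [GradedAlgebra 𝒜]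
    -- connectedness: the degree-zero component is `ℚ·1`
    (hconn : 𝒜 0 = Submodule.span ℚ {(1 : H)})
    -- the coproduct is homogeneous of degree `0`
    (hgradedComul : ∀ n : ℕ, ∀ x ∈ 𝒜 n,
      (Coalgebra.comul x : H ⊗[ℚ] H) ∈
        ⨆ p ∈ Finset.HasAntidiagonal.antidiagonal n,
          LinearMap.range (TensorProduct.map (𝒜 p.1).subtype (𝒜 p.2).subtype))
    -- a finite-dimensional left `H`-comodule `C`
    (C : Type*) [AddCommGroup C] [Module ℚ C] [FiniteDimensional ℚ C]
    (ρ : C →ₗ[ℚ] H ⊗[ℚ] C)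
    (hcoassoc : ∀ x : C,
      (TensorProduct.assoc ℚ H H C)
          ((LinearMap.rTensor C (Coalgebra.comul (R := ℚ))) (ρ x))
        = (LinearMap.lTensor H ρ) (ρ x))
    (hcounit : ∀ x : C,
      (TensorProduct.lid ℚ C)
          ((LinearMap.rTensor C (Coalgebra.counit (R := ℚ))) (ρ x)) = x) :
    ∃ D : Fin (Module.finrank ℚ C + 1) → Submodule ℚ C,
      Monotone D ∧
      (∀ i, Module.finrank ℚ (D i) = (i : ℕ)) ∧
      D (Fin.last _) = ⊤ ∧
      (∀ i, ∀ x ∈ D i,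
        ρ x ∈ LinearMap.range (LinearMap.lTensor H (D i).subtype)) := by
  exact Submodule.exists_complete_flag (IsSubcomodule ρ) (isSubcomodule_bot ρ)
    fun V hV hne => hV.exists_finrank_succ 𝒜 hconn hgradedComul hcoassoc hcounit hne
end

section
/- Let H be a bialgebra, x ∈ H, and y a primitive element of H. Suppose there is a bilinear 'natural growth' operation ⊤ satisfying Δ̃(x ⊤ y) = x ⊗ y + Σ_{(x)} x^{(1)} ⊗ (x^{(2)} ⊤ y) where Δ̃(x) = Σ x^{(1)} ⊗ x^{(2)}. Then for primitive elements p_1, ..., p_i, the iterated product p_i ⊤ ... ⊤ p_1 := ((p_i ⊤ ... ⊤ p_2) ⊤ p_1) satisfies Δ̃(p_i ⊤ ... ⊤ p_1) = Σ_{j=1}^{i−1} (p_i ⊤ ... ⊤ p_{j+1}) ⊗ (p_j ⊤ ... ⊤ p_1). -/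
open scoped TensorProduct

section

variable {H : Type*} [CommRing H] [Bialgebra ℚ H]

/-- `segAux t p n a = p (a+n) ⊤ ... ⊤ p a`, the iterated natural growth
(left-nested: `((p_{a+n} ⊤ ... ⊤ p_{a+1}) ⊤ p_a)`) for a bilinear operation `t`. -/
def segAux (t : H →ₗ[ℚ] H →ₗ[ℚ] H) (p : ℕ → H) : ℕ → ℕ → H
  | 0, a => p a
  | n + 1, a => t (segAux t p n (a + 1)) (p a)

/-- `seg t p a b = p_b ⊤ ... ⊤ p_a` for `a ≤ b`. -/
def seg (t : H →ₗ[ℚ] H →ₗ[ℚ] H) (p : ℕ → H) (a b : ℕ) : H :=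
  segAux t p (b - a) a

/-- The reduced coproduct `Δ̃(x) = Δ(x) − 1 ⊗ x − x ⊗ 1`. -/
noncomputable def rcomul (x : H) : H ⊗[ℚ] H :=
  Coalgebra.comul x - 1 ⊗ₜ[ℚ] x - x ⊗ₜ[ℚ] 1

lemma rcomul_segAux
    (t : H →ₗ[ℚ] H →ₗ[ℚ] H)
    (hgrowth : ∀ x y : H,
      (Coalgebra.comul y : H ⊗[ℚ] H) = y ⊗ₜ[ℚ] 1 + 1 ⊗ₜ[ℚ] y →
      rcomul (t x y) = x ⊗ₜ[ℚ] y + LinearMap.lTensor H (t.flip y) (rcomul x))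
    (p : ℕ → H) : ∀ n a : ℕ,
    (∀ k, a ≤ k → k ≤ a + n →
      (Coalgebra.comul (p k) : H ⊗[ℚ] H) = p k ⊗ₜ[ℚ] 1 + 1 ⊗ₜ[ℚ] p k) →
    rcomul (segAux t p n a)
      = ∑ j ∈ Finset.range n,
          segAux t p (n - (j + 1)) (a + j + 1) ⊗ₜ[ℚ] segAux t p j a := by
  intro n
  induction n with
  | zero =>
    intro a hp
    simp only [segAux, rcomul, Finset.range_zero, Finset.sum_empty,
      hp a le_rfl (Nat.le_add_right _ _)]
    abel
  | succ n ih =>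
    intro a hp
    have hpa := hp a le_rfl (Nat.le_add_right _ _)
    have key : rcomul (segAux t p (n + 1) a)
        = segAux t p n (a + 1) ⊗ₜ[ℚ] p a
          + LinearMap.lTensor H (t.flip (p a)) (rcomul (segAux t p n (a + 1))) := by
      simpa [segAux] using hgrowth (segAux t p n (a + 1)) (p a) hpa
    rw [key, ih (a + 1) (fun k hk hk' => hp k (le_trans (Nat.le_succ a) hk)
      (by omega)), map_sum]
    simp only [LinearMap.lTensor_tmul, LinearMap.flip_apply]
    rw [Finset.sum_range_succ']
    simp only [segAux]
    rw [add_comm]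
    congr 1
    · apply Finset.sum_congr rfl
      intro j hj
      congr 2 <;> omega


/-- Let `H` be a bialgebra with a bilinear natural growth operation `⊤ = t` satisfying
`Δ̃(x ⊤ y) = x ⊗ y + Σ_{(x)} x⁽¹⁾ ⊗ (x⁽²⁾ ⊤ y)` for all `x` and all primitive `y`.
Then for primitive elements `p_1, ..., p_i` the iterated product
`p_i ⊤ ... ⊤ p_1 = ((p_i ⊤ ... ⊤ p_2) ⊤ p_1)` satisfies
`Δ̃(p_i ⊤ ... ⊤ p_1) = Σ_{j=1}^{i−1} (p_i ⊤ ... ⊤ p_{j+1}) ⊗ (p_j ⊤ ... ⊤ p_1)`. -/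
theorem rcomul_iterated_top
    (t : H →ₗ[ℚ] H →ₗ[ℚ] H)
    (hgrowth : ∀ x y : H,
      (Coalgebra.comul y : H ⊗[ℚ] H) = y ⊗ₜ[ℚ] 1 + 1 ⊗ₜ[ℚ] y →
      rcomul (t x y) = x ⊗ₜ[ℚ] y + LinearMap.lTensor H (t.flip y) (rcomul x))
    (p : ℕ → H) (i : ℕ) (hi : 1 ≤ i)
    (hp : ∀ k, 1 ≤ k → k ≤ i →
      (Coalgebra.comul (p k) : H ⊗[ℚ] H) = p k ⊗ₜ[ℚ] 1 + 1 ⊗ₜ[ℚ] p k) :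
    rcomul (seg t p 1 i)
      = ∑ j ∈ Finset.Icc 1 (i - 1), seg t p (j + 1) i ⊗ₜ[ℚ] seg t p 1 j := by
  have h := rcomul_segAux t hgrowth p (i - 1) 1
    (fun k hk hk' => hp k hk (by omega))
  rw [show seg t p 1 i = segAux t p (i - 1) 1 from rfl, h]
  rw [show Finset.Icc 1 (i - 1) = Finset.Ico 1 i by
    rw [← Finset.Ico_add_one_right_eq_Icc]; congr 1; omega]
  rw [Finset.sum_Ico_eq_sum_range]
  apply Finset.sum_congr (by congr 1)
  intro j hj
  simp only [Finset.mem_range] at hj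
  simp only [seg]
  congr 2 <;> omega

end
end

section
/- Let C be a finite-dimensional comodule over the Hopf algebra of rooted trees H_R of dimension n+1 with n ≥ 1, and suppose C admits a complete flag of subcomodules with adapted basis (e_0,...,e_n), so that Δ_C(e_i) = Σ_{j=0}^{i} Q_{i,j} ⊗ e_j with Q_{i,j} ∈ H_R. Then coassociativity and counity force Q_{i,i} = 1 for all i, each Q_{i,i−1} is primitive, and Δ(Q_{i,j}) = Σ_{l=j}^{i} Q_{i,l} ⊗ Q_{l,j}. -/
/-!
Extend the coefficients by `Q i j = 0` for `j > i`. Comparing the coefficients of `e l` on both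
sides of the counit and coassociativity identities for `Δ_C (e i)` shows that the coefficients of
any comodule with respect to a finite basis form a matrix coalgebra:
`ε (Q i j) = δ i j` and `Δ (Q i l) = ∑ j, Q i j ⊗ Q j l`. For a triangular matrix the last sum
runs over `j ∈ [l, i]`; so each `Q i i` is group-like with counit `1`, hence equals `1`, and when
`i` covers `l` only the two terms `j = l` and `j = i` survive.
-/

open scoped TensorProduct

open TensorProduct

theorem TensorProduct.equivFinsuppOfBasisRight_sum_tmul {R M N κ : Type*} [CommSemiring R]
    [AddCommMonoid M] [Module R M] [AddCommMonoid N] [Module R N] [Fintype κ] [DecidableEq κ]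
    (𝒞 : Module.Basis κ R N) (m : κ → M) (k : κ) :
    equivFinsuppOfBasisRight 𝒞 (∑ k, m k ⊗ₜ[R] 𝒞 k) k = m k := by
  simp [Finsupp.single_apply]

theorem CovBy.finset_Icc_eq {α : Type*} [PartialOrder α] [LocallyFiniteOrder α] [DecidableEq α]
    {a b : α} (h : a ⋖ b) : Finset.Icc a b = {a, b} :=
  Finset.coe_injective <| by simpa using h.Icc_eq

section MatrixCoefficients

variable {R H C ι : Type*} [CommSemiring R] [AddCommMonoid H] [Module R H] [Coalgebra R H]
  [AddCommMonoid C] [Module R C] [Fintype ι] [DecidableEq ι]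
  {e : Module.Basis ι R C} {ρ : C →ₗ[R] H ⊗[R] C} {c : ι → ι → H}

theorem counit_comodule_coeff_eq_ite
    (hcounit : ∀ x : C, TensorProduct.lid R C
      (LinearMap.rTensor C (Coalgebra.counit (R := R)) (ρ x)) = x)
    (hc : ∀ i, ρ (e i) = ∑ j, c i j ⊗ₜ[R] e j) (i j : ι) :
    Coalgebra.counit (R := R) (c i j) = if i = j then 1 else 0 := by
  have h := congrArg (fun x => e.repr x j) (hcounit (e i))
  simpa [hc, Finsupp.single_apply] using h

theorem comul_comodule_coeff_eq_sum
    (hcoassoc : ∀ x : C, TensorProduct.assoc R H H C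
      (LinearMap.rTensor C (Coalgebra.comul (R := R)) (ρ x)) = LinearMap.lTensor H ρ (ρ x))
    (hc : ∀ i, ρ (e i) = ∑ j, c i j ⊗ₜ[R] e j) (i l : ι) :
    Coalgebra.comul (R := R) (c i l) = ∑ j, c i j ⊗ₜ[R] c j l := by
  have h : ∑ l, Coalgebra.comul (R := R) (c i l) ⊗ₜ[R] e l
      = ∑ l, (∑ j, c i j ⊗ₜ[R] c j l) ⊗ₜ[R] e l := by
    apply (TensorProduct.assoc R H H C).injective
    have hei := hcoassoc (e i)
    simp only [hc, map_sum, LinearMap.rTensor_tmul, LinearMap.lTensor_tmul, tmul_sum] at hei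
    simp only [hei, map_sum, sum_tmul, TensorProduct.assoc_tmul]
    exact Finset.sum_comm
  simpa only [equivFinsuppOfBasisRight_sum_tmul] using
    congrArg (fun x => equivFinsuppOfBasisRight e x l) h

end MatrixCoefficients

theorem eq_sum_ite_of_eq_sum_Iic {R H C ι : Type*} [CommSemiring R] [AddCommMonoid H]
    [Module R H] [AddCommMonoid C] [Module R C] [Fintype ι] [LinearOrder ι]
    [LocallyFiniteOrderBot ι] {e : Module.Basis ι R C} {ρ : C →ₗ[R] H ⊗[R] C} {Q : ι → ι → H}
    (hQ : ∀ i, ρ (e i) = ∑ j ∈ Finset.Iic i, Q i j ⊗ₜ[R] e j) (i : ι) :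
    ρ (e i) = ∑ j, (if j ≤ i then Q i j else 0) ⊗ₜ[R] e j := by
  rw [hQ i, ← Finset.filter_ge_eq_Iic, Finset.sum_filter]
  simp only [ite_tmul]

section Triangular

variable {R H C ι : Type*} [CommSemiring R] [AddCommMonoid H] [Module R H] [Coalgebra R H]
  [AddCommMonoid C] [Module R C] [Fintype ι] [LinearOrder ι] [LocallyFiniteOrderBot ι]
  {e : Module.Basis ι R C} {ρ : C →ₗ[R] H ⊗[R] C} {Q : ι → ι → H}

theorem counit_diag_eq_one_of_triangular
    (hcounit : ∀ x : C, TensorProduct.lid R C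
      (LinearMap.rTensor C (Coalgebra.counit (R := R)) (ρ x)) = x)
    (hQ : ∀ i, ρ (e i) = ∑ j ∈ Finset.Iic i, Q i j ⊗ₜ[R] e j) (i : ι) :
    Coalgebra.counit (R := R) (Q i i) = 1 := by
  simpa using counit_comodule_coeff_eq_ite hcounit (eq_sum_ite_of_eq_sum_Iic hQ) i i

variable [LocallyFiniteOrder ι]

theorem comul_eq_sum_Icc_of_triangular
    (hcoassoc : ∀ x : C, TensorProduct.assoc R H H C
      (LinearMap.rTensor C (Coalgebra.comul (R := R)) (ρ x)) = LinearMap.lTensor H ρ (ρ x))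
    (hQ : ∀ i, ρ (e i) = ∑ j ∈ Finset.Iic i, Q i j ⊗ₜ[R] e j) {i l : ι} (hli : l ≤ i) :
    Coalgebra.comul (R := R) (Q i l) = ∑ j ∈ Finset.Icc l i, Q i j ⊗ₜ[R] Q j l := by
  have h := comul_comodule_coeff_eq_sum hcoassoc (eq_sum_ite_of_eq_sum_Iic hQ) i l
  rw [if_pos hli] at h
  rw [h, ← Finset.sum_subset (Finset.subset_univ _)]
  · refine Finset.sum_congr rfl fun j hj => ?_
    obtain ⟨hlj, hji⟩ := Finset.mem_Icc.mp hj
    rw [if_pos hji, if_pos hlj]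
  · intro j _ hj
    rcases not_and_or.mp (Finset.mem_Icc.not.mp hj) with hlj | hji
    · rw [if_neg hlj, tmul_zero]
    · rw [if_neg hji, zero_tmul]

theorem comul_diag_of_triangular
    (hcoassoc : ∀ x : C, TensorProduct.assoc R H H C
      (LinearMap.rTensor C (Coalgebra.comul (R := R)) (ρ x)) = LinearMap.lTensor H ρ (ρ x))
    (hQ : ∀ i, ρ (e i) = ∑ j ∈ Finset.Iic i, Q i j ⊗ₜ[R] e j) (i : ι) :
    Coalgebra.comul (R := R) (Q i i) = Q i i ⊗ₜ[R] Q i i := by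
  simpa using comul_eq_sum_Icc_of_triangular hcoassoc hQ le_rfl (i := i)

theorem comul_eq_of_triangular_of_covBy
    (hcoassoc : ∀ x : C, TensorProduct.assoc R H H C
      (LinearMap.rTensor C (Coalgebra.comul (R := R)) (ρ x)) = LinearMap.lTensor H ρ (ρ x))
    (hQ : ∀ i, ρ (e i) = ∑ j ∈ Finset.Iic i, Q i j ⊗ₜ[R] e j) {i j : ι} (hji : j ⋖ i) :
    Coalgebra.comul (R := R) (Q i j) = Q i j ⊗ₜ[R] Q j j + Q i i ⊗ₜ[R] Q i j := by
  rw [comul_eq_sum_Icc_of_triangular hcoassoc hQ hji.le, hji.finset_Icc_eq,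
    Finset.sum_pair hji.ne]

end Triangular

theorem flag_comodule_structure_constants_general
    (H : Type*) [CommRing H] [Bialgebra ℚ H]
    -- the only group-like element of `H` is `1`
    (hgl : ∀ x : H, (Coalgebra.comul x : H ⊗[ℚ] H) = x ⊗ₜ[ℚ] x → x = 0 ∨ x = 1)
    (n : ℕ)
    (C : Type*) [AddCommGroup C] [Module ℚ C]
    (e : Module.Basis (Fin (n + 1)) ℚ C)
    (ρ : C →ₗ[ℚ] H ⊗[ℚ] C)
    (hcoassoc : ∀ x : C,
      (TensorProduct.assoc ℚ H H C)
          ((LinearMap.rTensor C (Coalgebra.comul (R := ℚ))) (ρ x))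
        = (LinearMap.lTensor H ρ) (ρ x))
    (hcounit : ∀ x : C,
      (TensorProduct.lid ℚ C)
          ((LinearMap.rTensor C (Coalgebra.counit (R := ℚ))) (ρ x)) = x)
    (Q : Fin (n + 1) → Fin (n + 1) → H)
    (hflag : ∀ i : Fin (n + 1), ρ (e i) = ∑ j ∈ Finset.Iic i, Q i j ⊗ₜ[ℚ] e j) :
    (∀ i : Fin (n + 1), Q i i = 1) ∧
    (∀ i j : Fin (n + 1), j ≤ i →
      (Coalgebra.comul (Q i j) : H ⊗[ℚ] H)
        = ∑ l ∈ Finset.Icc j i, Q i l ⊗ₜ[ℚ] Q l j) ∧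
    (∀ i j : Fin (n + 1), (i : ℕ) = (j : ℕ) + 1 →
      (Coalgebra.comul (Q i j) : H ⊗[ℚ] H)
        = Q i j ⊗ₜ[ℚ] 1 + 1 ⊗ₜ[ℚ] Q i j) := by
  have hdiag (i : Fin (n + 1)) : Q i i = 1 := by
    refine (hgl _ (comul_diag_of_triangular hcoassoc hflag i)).resolve_left fun h0 => ?_
    simpa [h0] using counit_diag_eq_one_of_triangular hcounit hflag i
  refine ⟨hdiag, fun i j => comul_eq_sum_Icc_of_triangular hcoassoc hflag, fun i j hij => ?_⟩
  have hji : j ⋖ i := Fin.covBy_iff.mpr (Nat.covBy_iff_add_one_eq.mpr hij.symm)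
  rw [comul_eq_of_triangular_of_covBy hcoassoc hflag hji, hdiag, hdiag]

/-- Let `C` be an `(n+1)`-dimensional comodule over the Hopf algebra of rooted trees
`H` — here axiomatized as a bialgebra over `ℚ` whose only group-like element is `1` —
with a basis `(e_0, ..., e_n)` adapted to a complete flag of subcomodules, so that
`Δ_C(e_i) = Σ_{j ≤ i} Q_{i,j} ⊗ e_j`.  Then coassociativity and counity force
`Q_{i,i} = 1` for all `i`, `Δ(Q_{i,j}) = Σ_{l=j}^{i} Q_{i,l} ⊗ Q_{l,j}`, and each
`Q_{i,i−1}` is primitive. -/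
theorem flag_comodule_structure_constants
    (H : Type*) [CommRing H] [Bialgebra ℚ H]
    -- the only group-like element of `H` is `1`
    (hgl : ∀ x : H, (Coalgebra.comul x : H ⊗[ℚ] H) = x ⊗ₜ[ℚ] x → x = 0 ∨ x = 1)
    (n : ℕ) (hn : 1 ≤ n)
    (C : Type*) [AddCommGroup C] [Module ℚ C]
    (e : Module.Basis (Fin (n + 1)) ℚ C)
    (ρ : C →ₗ[ℚ] H ⊗[ℚ] C)
    (hcoassoc : ∀ x : C,
      (TensorProduct.assoc ℚ H H C)
          ((LinearMap.rTensor C (Coalgebra.comul (R := ℚ))) (ρ x))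
        = (LinearMap.lTensor H ρ) (ρ x))
    (hcounit : ∀ x : C,
      (TensorProduct.lid ℚ C)
          ((LinearMap.rTensor C (Coalgebra.counit (R := ℚ))) (ρ x)) = x)
    (Q : Fin (n + 1) → Fin (n + 1) → H)
    (hflag : ∀ i : Fin (n + 1), ρ (e i) = ∑ j ∈ Finset.Iic i, Q i j ⊗ₜ[ℚ] e j) :
    (∀ i : Fin (n + 1), Q i i = 1) ∧
    (∀ i j : Fin (n + 1), j ≤ i →
      (Coalgebra.comul (Q i j) : H ⊗[ℚ] H)
        = ∑ l ∈ Finset.Icc j i, Q i l ⊗ₜ[ℚ] Q l j) ∧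
    (∀ i j : Fin (n + 1), (i : ℕ) = (j : ℕ) + 1 →
      (Coalgebra.comul (Q i j) : H ⊗[ℚ] H)
        = Q i j ⊗ₜ[ℚ] 1 + 1 ⊗ₜ[ℚ] Q i j) :=
  flag_comodule_structure_constants_general H hgl n C e ρ hcoassoc hcounit Q hflag
end
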